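/- Let S be a finite p-group, F a saturated fusion system on S, and suppose P ≤ Q ≤ S with P F-centric. If ψ₁, ψ₂ : Q → S are two F-morphisms with ψ₁|_P = ψ₂|_P, then there exists z ∈ Z(P) such that ψ₂ = ψ₁ ∘ c_z on Q, where c_z is conjugation by z. -/

import Mathlib

/-- A fusion system on a group `S`, encoded via partial maps: `Mor P f` asserts that the
restriction of `f : S → S` to the subgroup `P ≤ S` is a morphism of the fusion system,
i.e. an injective group homomorphism from `P` into `S`. -/
structure FusionSystem (S : Type) [Group S] where
  /-- `Mor P f`: the restriction of `f` to `P` is a morphism `P → S` of the fusion system. -/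
  Mor : Subgroup S → (S → S) → Prop
  mul_on : ∀ {P : Subgroup S} {f : S → S}, Mor P f → ∀ x ∈ P, ∀ y ∈ P, f (x * y) = f x * f y
  inj_on : ∀ {P : Subgroup S} {f : S → S}, Mor P f → Set.InjOn f (P : Set S)
  /-- Every homomorphism induced by conjugation in `S` is a morphism. -/
  conj_mem : ∀ (P : Subgroup S) (s : S), Mor P fun x => s * x * s⁻¹
  /-- Morphisms are closed under composition. -/
  comp_mem : ∀ {P Q : Subgroup S} {f g : S → S}, Mor P f → Mor Q g →
      (∀ x ∈ P, f x ∈ Q) → Mor P (g ∘ f)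
  /-- The inverse of the isomorphism onto the image is again a morphism. -/
  inv_mem : ∀ {P : Subgroup S} {f : S → S} (Q : Subgroup S), Mor P f →
      (Q : Set S) = f '' (P : Set S) → ∃ g : S → S, Mor Q g ∧ ∀ x ∈ P, g (f x) = x
  /-- Morphisms restrict to subgroups. -/
  restrict_mem : ∀ {P : Subgroup S} {f : S → S} (Q : Subgroup S), Q ≤ P → Mor P f → Mor Q f

namespace FusionSystem

variable {S : Type} [Group S] (F : FusionSystem S)

/-- Two subgroups are `F`-conjugate if some morphism of `F` maps one onto the other. -/
def IsConj (P Q : Subgroup S) : Prop :=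
  ∃ f : S → S, F.Mor P f ∧ f '' (P : Set S) = (Q : Set S)

/-- `P` is fully `F`-normalized: its normalizer has maximal order in its `F`-class. -/
def FullyNormalized (P : Subgroup S) : Prop :=
  ∀ Q : Subgroup S, F.IsConj P Q → Nat.card (Subgroup.normalizer (Q : Set S)) ≤ Nat.card (Subgroup.normalizer (P : Set S))

/-- `P` is fully `F`-centralized: its centralizer has maximal order in its `F`-class. -/
def FullyCentralized (P : Subgroup S) : Prop :=
  ∀ Q : Subgroup S, F.IsConj P Q →
    Nat.card (Subgroup.centralizer (Q : Set S)) ≤ Nat.card (Subgroup.centralizer (P : Set S))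

/-- `P` is `F`-centric: every `F`-conjugate of `P` contains its own `S`-centralizer. -/
def Centric (P : Subgroup S) : Prop :=
  ∀ Q : Subgroup S, F.IsConj P Q → (Subgroup.centralizer (Q : Set S) : Set S) ⊆ (Q : Set S)

/-- Saturation of a fusion system at the prime `p`: (I) fully normalized subgroups are fully
centralized and their `S`-automorphisms have index prime to `p` among their
`F`-automorphisms (the Sylow axiom); (II) the extension axiom: a morphism with fully
centralized image extends to its extender `N_φ`. -/
def Saturated (p : ℕ) : Prop :=
  (∀ P : Subgroup S, F.FullyNormalized P →
    F.FullyCentralized P ∧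
      ¬ p ∣ (Set.ncard {g : ↥P → S | ∃ f : S → S, F.Mor P f ∧
              f '' (P : Set S) = (P : Set S) ∧ ∀ x : ↥P, g x = f (x : S)} /
        Set.ncard {g : ↥P → S | ∃ s ∈ Subgroup.normalizer (P : Set S), ∀ x : ↥P, g x = s * (x : S) * s⁻¹})) ∧
  (∀ (P : Subgroup S) (f : S → S), F.Mor P f →
    (∀ Q : Subgroup S, (Q : Set S) = f '' (P : Set S) → F.FullyCentralized Q) →
    ∃ (R : Subgroup S) (g : S → S), F.Mor R g ∧ P ≤ R ∧ (∀ x ∈ P, g x = f x) ∧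
      (R : Set S) = {x : S | x ∈ Subgroup.normalizer (P : Set S) ∧
        ∃ y : S, ∀ q ∈ P, f (x * q * x⁻¹) = y * f q * y⁻¹})

/-- A morphism of `F` defined on `P` is nonextendable if it admits no extension to a strictly
larger subgroup. -/
def Nonextendable (P : Subgroup S) (f : S → S) : Prop :=
  F.Mor P f ∧ ∀ (R : Subgroup S) (g : S → S), P ≤ R → F.Mor R g →
    (∀ x ∈ P, g x = f x) → R = P

end FusionSystem

/-!
Transport along `ψ₁`: `α = ψ₂ ∘ ψ₁⁻¹` is a morphism on `ψ₁(Q)` fixing the centric subgroup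
`T = ψ₁(P)` pointwise, and it suffices to show that `α` is conjugation by some `z ∈ T`.
Normalizers grow in `p`-groups, so induction on `T` (replacing `T` by `N_Q(T) > T`) reduces this
to the case `Q ≤ N_S(T)`. There every `x⁻¹ α(x)` centralizes `T`, hence lies in `T`; therefore
`αⁿ(x) = x (x⁻¹ α(x))ⁿ` and `α` has `p`-power order. After moving `Q` to a fully normalized
`F`-conjugate, the Sylow axiom conjugates `α` inside `Aut_F(Q)` to some `c_s` with `s ∈ S`; then
`s` centralizes the image of `T`, so lies in it since `T` is centric, and pulling back gives
`α = c_z`.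
-/

open Subgroup

theorem IsPGroup.lt_normalizer_inf {G : Type*} [Group G] [Finite G] {p : ℕ} [Fact p.Prime]
    (hG : IsPGroup p G) {T Q : Subgroup G} (h : T < Q) :
    T < normalizer (T : Set G) ⊓ Q := by
  have := (hG.to_subgroup Q).isNilpotent
  have hT : T.subgroupOf Q < ⊤ :=
    lt_top_iff_ne_top.mpr (mt subgroupOf_eq_top.mp (not_le_of_gt h))
  have hlt := Group.normalizerCondition_of_isNilpotent _ hT
  rw [← subgroupOf_normalizer_eq h.le, ← inf_subgroupOf_right,
    ← map_subtype_lt_map_subtype, subgroupOf_map_subtype, subgroupOf_map_subtype] at hlt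
  simpa [h.le, inf_assoc] using hlt

theorem Sylow.exists_conj_mem_of_pow_eq_one {G : Type*} [Group G] [Finite G] {p : ℕ}
    [Fact p.Prime] (P : Sylow p G) {g : G} {k : ℕ} (hg : g ^ p ^ k = 1) :
    ∃ h : G, h * g * h⁻¹ ∈ P := by
  have hg : IsPGroup p (zpowers g) := by
    obtain ⟨m, -, hm⟩ := (Nat.dvd_prime_pow Fact.out).mp (orderOf_dvd_of_pow_eq_one hg)
    exact IsPGroup.of_card (n := m) (by rw [Nat.card_zpowers, hm])
  obtain ⟨R, hR⟩ := hg.exists_le_sylow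
  obtain ⟨h, rfl⟩ := MulAction.exists_smul_eq G R P
  refine ⟨h, ?_⟩
  rw [← SetLike.mem_coe, ← Sylow.coe_coe, Sylow.coe_subgroup_smul]
  exact smul_mem_pointwise_smul _ _ _ (hR (mem_zpowers g))

namespace FusionSystem

variable {S : Type} [Group S] {F : FusionSystem S}

namespace Mor

variable {P : Subgroup S} {f : S → S}

lemma map_one (h : F.Mor P f) : f 1 = 1 := by
  have := F.mul_on h 1 P.one_mem 1 P.one_mem
  rwa [one_mul, left_eq_mul] at this

lemma map_inv (h : F.Mor P f) {x : S} (hx : x ∈ P) : f x⁻¹ = (f x)⁻¹ :=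
  eq_inv_of_mul_eq_one_right <| by
    rw [← F.mul_on h x hx x⁻¹ (P.inv_mem hx), mul_inv_cancel, h.map_one]

lemma map_conj (h : F.Mor P f) {z x : S} (hz : z ∈ P) (hx : x ∈ P) :
    f (z * x * z⁻¹) = f z * f x * (f z)⁻¹ := by
  rw [F.mul_on h _ (P.mul_mem hz hx) _ (P.inv_mem hz), F.mul_on h z hz x hx, h.map_inv hz]

def map (h : F.Mor P f) (R : Subgroup S) (hR : R ≤ P) : Subgroup S where
  carrier := f '' R
  one_mem' := ⟨1, R.one_mem, h.map_one⟩
  mul_mem' := by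
    rintro _ _ ⟨a, ha, rfl⟩ ⟨b, hb, rfl⟩
    exact ⟨a * b, R.mul_mem ha hb, F.mul_on h a (hR ha) b (hR hb)⟩
  inv_mem' := by
    rintro _ ⟨a, ha, rfl⟩
    exact ⟨a⁻¹, R.inv_mem ha, h.map_inv (hR ha)⟩

lemma apply_mem_map (h : F.Mor P f) {R : Subgroup S} {hR : R ≤ P} {x : S} (hx : x ∈ R) :
    f x ∈ h.map R hR :=
  ⟨x, hx, rfl⟩

lemma map_mono (h : F.Mor P f) {R₁ R₂ : Subgroup S} (h₁ : R₁ ≤ P) (h₂ : R₂ ≤ P)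
    (hle : R₁ ≤ R₂) : h.map R₁ h₁ ≤ h.map R₂ h₂ :=
  Set.image_mono hle

lemma isConj_map (h : F.Mor P f) (R : Subgroup S) (hR : R ≤ P) : F.IsConj R (h.map R hR) :=
  ⟨f, F.restrict_mem R hR h, rfl⟩

lemma exists_inverse (h : F.Mor P f) :
    ∃ g : S → S, F.Mor (h.map P le_rfl) g ∧ (∀ y ∈ h.map P le_rfl, g y ∈ P) ∧
      ∀ x ∈ P, g (f x) = x := by
  obtain ⟨g, hg, hgf⟩ := F.inv_mem (h.map P le_rfl) h rfl
  refine ⟨g, hg, ?_, hgf⟩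
  rintro _ ⟨x, hx, rfl⟩
  rwa [hgf x hx]

end Mor

lemma isConj_refl (P : Subgroup S) : F.IsConj P P :=
  ⟨fun x => 1 * x * 1⁻¹, F.conj_mem P 1, by simp⟩

lemma IsConj.trans {P Q R : Subgroup S} (hPQ : F.IsConj P Q) (hQR : F.IsConj Q R) :
    F.IsConj P R := by
  obtain ⟨f, hf, hfP⟩ := hPQ
  obtain ⟨g, hg, hgQ⟩ := hQR
  refine ⟨g ∘ f, F.comp_mem hf hg fun x hx => ?_, by rw [Set.image_comp, hfP, hgQ]⟩
  rw [← SetLike.mem_coe, ← hfP]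
  exact ⟨x, hx, rfl⟩

variable {T N : Subgroup S} {α : S → S}

lemma Centric.centralizer_le (hT : F.Centric T) : centralizer (T : Set S) ≤ T :=
  hT T (isConj_refl T)

lemma Centric.of_isConj {T' : Subgroup S} (hT : F.Centric T) (h : F.IsConj T T') :
    F.Centric T' :=
  fun Q hQ => hT Q (h.trans hQ)

lemma Centric.mono (hT : F.Centric T) (hTN : T ≤ N) : F.Centric N := by
  rintro N' ⟨f, hf, hfN⟩ x hx
  have hTf : (hf.map T hTN : Set S) ⊆ N' := by
    rw [← hfN]
    exact Set.image_mono hTN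
  exact hTf <| hT _ (hf.isConj_map T hTN) (Subgroup.centralizer_le hTf hx)

namespace Mor

lemma inv_mul_mem_of_fix (hα : F.Mor N α) (hT : F.Centric T) (hTN : T ≤ N)
    (hNT : N ≤ normalizer (T : Set S)) (hfix : ∀ t ∈ T, α t = t) {x : S} (hx : x ∈ N) :
    x⁻¹ * α x ∈ T := by
  refine hT.centralizer_le (mem_centralizer_iff.mpr fun t ht => ?_)
  have h := hα.map_conj hx (hTN ht)
  rw [hfix _ ((mem_normalizer_iff.mp (hNT hx) t).mp ht), hfix t ht] at h
  calc t * (x⁻¹ * α x) = x⁻¹ * (x * t * x⁻¹) * α x := by group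
    _ = x⁻¹ * α x * t := by rw [h]; group

lemma apply_mem_of_fix (hα : F.Mor N α) (hT : F.Centric T) (hTN : T ≤ N)
    (hNT : N ≤ normalizer (T : Set S)) (hfix : ∀ t ∈ T, α t = t) {x : S} (hx : x ∈ N) :
    α x ∈ N := by
  simpa using N.mul_mem hx (hTN (hα.inv_mul_mem_of_fix hT hTN hNT hfix hx))

lemma iterate_apply_eq_mul_pow (hα : F.Mor N α) (hTN : T ≤ N) (hfix : ∀ t ∈ T, α t = t)
    {x : S} (hx : x ∈ N) (hc : x⁻¹ * α x ∈ T) (n : ℕ) :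
    α^[n] x = x * (x⁻¹ * α x) ^ n := by
  induction n with
  | zero => simp
  | succ n ih =>
    have hcn : (x⁻¹ * α x) ^ n ∈ T := T.pow_mem hc n
    rw [Function.iterate_succ_apply', ih, F.mul_on hα x hx _ (hTN hcn), hfix _ hcn, pow_succ',
      ← mul_assoc, mul_inv_cancel_left]

end Mor

lemma exists_conj_of_comp_eq_conj_comp (hT : F.Centric T) (hTN : T ≤ N) {f : S → S}
    (hf : F.Mor N f) (hα : ∀ x ∈ N, α x ∈ N) (hfix : ∀ t ∈ T, α t = t) {s : S}
    (hs : ∀ x ∈ N, s * f x * s⁻¹ = f (α x)) :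
    ∃ z ∈ T, ∀ x ∈ N, α x = z * x * z⁻¹ := by
  have hsT : s ∈ hf.map T hTN := by
    refine (hT.of_isConj (hf.isConj_map T hTN)).centralizer_le (mem_centralizer_iff.mpr ?_)
    rintro _ ⟨t, ht, rfl⟩
    have h := hs t (hTN ht)
    rw [hfix t ht] at h
    calc f t * s = s * f t * s⁻¹ * s := by rw [h]
      _ = s * f t := by group
  obtain ⟨z, hz, rfl⟩ := hsT
  refine ⟨z, hz, fun x hx => F.inj_on hf (hα x hx)
    (N.mul_mem (N.mul_mem (hTN hz) hx) (N.inv_mem (hTN hz))) ?_⟩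
  rw [hf.map_conj (hTN hz) hx]
  exact (hs x hx).symm

lemma image_eq_of_coe_mulAut_apply {P : Subgroup S} {f : S → S} {σ : MulAut P}
    (hσ : ∀ x : P, (σ x : S) = f x) : f '' P = P := by
  refine Set.Subset.antisymm ?_ fun y hy => ⟨σ.symm ⟨y, hy⟩, (σ.symm ⟨y, hy⟩).2, ?_⟩
  · rintro _ ⟨x, hx, rfl⟩
    rw [← hσ ⟨x, hx⟩]
    exact (σ ⟨x, hx⟩).2
  · rw [← hσ, MulEquiv.apply_symm_apply]

variable (F) in
/-- `Aut_F(P)`; its subgroup `Aut_S(P)` is `P.normalizerMonoidHom.range`. -/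
def autGroup (P : Subgroup S) : Subgroup (MulAut P) where
  carrier := {σ | ∃ f : S → S, F.Mor P f ∧ ∀ x : P, (σ x : S) = f x}
  one_mem' := ⟨fun x => 1 * x * 1⁻¹, F.conj_mem P 1, fun x => by simp⟩
  mul_mem' := by
    rintro σ τ ⟨f, hf, hσ⟩ ⟨g, hg, hτ⟩
    refine ⟨f ∘ g, F.comp_mem hg hf fun x hx => ?_, fun x => ?_⟩
    · rw [← hτ ⟨x, hx⟩]
      exact (τ ⟨x, hx⟩).2
    · rw [MulAut.mul_apply, hσ, hτ, Function.comp_apply]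
  inv_mem' := by
    rintro σ ⟨f, hf, hσ⟩
    obtain ⟨g, hg, hgf⟩ := F.inv_mem P hf (image_eq_of_coe_mulAut_apply hσ).symm
    refine ⟨g, hg, fun x => ?_⟩
    rw [← hgf _ (σ⁻¹ x).2, ← hσ, MulAut.inv_apply, MulEquiv.apply_symm_apply]

variable (F) in
lemma normalizerMonoidHom_range_le_autGroup (P : Subgroup S) :
    P.normalizerMonoidHom.range ≤ F.autGroup P := by
  rintro _ ⟨s, rfl⟩
  exact ⟨fun x => s * x * (s : S)⁻¹, F.conj_mem P s, fun x => rfl⟩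

lemma ncard_setOf_coe_mulAut_apply {P : Subgroup S} (A : Subgroup (MulAut P)) :
    {g : P → S | ∃ σ ∈ A, ∀ x, g x = σ x}.ncard = Nat.card A := by
  have hrange : {g : P → S | ∃ σ ∈ A, ∀ x, g x = σ x} =
      Set.range fun σ : A => fun x => ((σ : MulAut P) x : S) := by
    ext g
    simp only [Set.mem_ofPred_eq, Set.mem_range, funext_iff, Subtype.exists, exists_prop, eq_comm]
  rw [hrange, ← Nat.card_coe_set_eq, Nat.card_range_of_injective]
  intro σ τ hστ
  exact Subtype.ext <| MulEquiv.ext fun x => Subtype.ext (congrFun hστ x)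

lemma ncard_normalizerMonoidHom_range (P : Subgroup S) :
    {g : P → S | ∃ s ∈ normalizer (P : Set S), ∀ x : P, g x = s * x * s⁻¹}.ncard =
      Nat.card P.normalizerMonoidHom.range := by
  rw [← ncard_setOf_coe_mulAut_apply]
  congr 1
  ext g
  constructor
  · rintro ⟨s, hs, hg⟩
    exact ⟨_, ⟨⟨s, hs⟩, rfl⟩, hg⟩
  · rintro ⟨_, ⟨s, rfl⟩, hg⟩
    exact ⟨s, s.2, hg⟩

section Finite

variable [Finite S] {p : ℕ}

noncomputable def Mor.toMulAut {P : Subgroup S} {f : S → S} (h : F.Mor P f)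
    (hf : ∀ x ∈ P, f x ∈ P) : MulAut P :=
  MulEquiv.ofBijective
    ({ toFun := fun x => ⟨f x, hf x x.2⟩
       map_one' := Subtype.ext h.map_one
       map_mul' := fun x y => Subtype.ext (F.mul_on h x x.2 y y.2) } : P →* P)
    (Finite.injective_iff_bijective.mp fun x y hxy =>
      Subtype.ext (F.inj_on h x.2 y.2 (congrArg Subtype.val hxy)))

lemma Mor.coe_toMulAut_apply {P : Subgroup S} {f : S → S} (h : F.Mor P f)
    (hf : ∀ x ∈ P, f x ∈ P) (x : P) : (h.toMulAut hf x : S) = f x :=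
  rfl

lemma Mor.coe_toMulAut_pow_apply {P : Subgroup S} {f : S → S} (h : F.Mor P f)
    (hf : ∀ x ∈ P, f x ∈ P) (n : ℕ) (x : P) : ((h.toMulAut hf ^ n) x : S) = f^[n] x := by
  induction n with
  | zero => rfl
  | succ n ih =>
    rw [pow_succ', MulAut.mul_apply, coe_toMulAut_apply, ih, Function.iterate_succ_apply']

lemma ncard_autGroup (P : Subgroup S) :
    {g : P → S | ∃ f : S → S, F.Mor P f ∧ f '' P = P ∧ ∀ x : P, g x = f x}.ncard =
      Nat.card (F.autGroup P) := by
  rw [← ncard_setOf_coe_mulAut_apply]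
  congr 1
  ext g
  constructor
  · rintro ⟨f, hf, hfP, hg⟩
    have hmaps : ∀ x ∈ P, f x ∈ P := fun x hx => by
      rw [← SetLike.mem_coe, ← hfP]
      exact ⟨x, hx, rfl⟩
    exact ⟨hf.toMulAut hmaps, ⟨f, hf, fun _ => rfl⟩, hg⟩
  · rintro ⟨σ, ⟨f, hf, hσ⟩, hg⟩
    exact ⟨f, hf, image_eq_of_coe_mulAut_apply hσ, fun x => (hg x).trans (hσ x)⟩

lemma Saturated.not_dvd_relIndex (hF : F.Saturated p) {P : Subgroup S}
    (hP : F.FullyNormalized P) :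
    ¬ p ∣ P.normalizerMonoidHom.range.relIndex (F.autGroup P) := by
  have hcard := relIndex_mul_relIndex ⊥ _ _ bot_le (F.normalizerMonoidHom_range_le_autGroup P)
  rw [relIndex_bot_left, relIndex_bot_left] at hcard
  have h := (hF.1 P hP).2
  rwa [ncard_autGroup, ncard_normalizerMonoidHom_range, ← hcard,
    Nat.mul_div_cancel_left _ Nat.card_pos] at h

lemma Saturated.exists_conj_mem_range (hp : p.Prime) (hS : IsPGroup p S)
    (hF : F.Saturated p) {P : Subgroup S} (hP : F.FullyNormalized P) {σ : MulAut P}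
    (hσ : σ ∈ F.autGroup P) {k : ℕ} (hk : σ ^ p ^ k = 1) :
    ∃ τ ∈ F.autGroup P, τ * σ * τ⁻¹ ∈ P.normalizerMonoidHom.range := by
  have := Fact.mk hp
  have hB : IsPGroup p (P.normalizerMonoidHom.range.subgroupOf (F.autGroup P)) :=
    ((hS.to_subgroup _).of_surjective _ P.normalizerMonoidHom.rangeRestrict_surjective).of_equiv
      (subgroupOfEquivOfLe (F.normalizerMonoidHom_range_le_autGroup P)).symm
  obtain ⟨τ, hτ⟩ := (hB.toSylow (hF.not_dvd_relIndex hP)).exists_conj_mem_of_pow_eq_one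
    (g := (⟨σ, hσ⟩ : F.autGroup P)) (Subtype.ext hk)
  exact ⟨τ, τ.2, hτ⟩

lemma exists_mor_fullyNormalized_map (N : Subgroup S) :
    ∃ (ω : S → S) (hω : F.Mor N ω), F.FullyNormalized (hω.map N le_rfl) := by
  obtain ⟨N', hNN', hmax⟩ := Set.Finite.exists_maximalFor
    (fun N₁ : Subgroup S => Nat.card (normalizer (N₁ : Set S))) {N₁ | F.IsConj N N₁}
    (Set.toFinite _) ⟨N, isConj_refl N⟩
  obtain ⟨ω, hω, hωN⟩ := id hNN'
  obtain rfl : hω.map N le_rfl = N' := SetLike.coe_injective hωN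
  refine ⟨ω, hω, fun Q hQ => ?_⟩
  by_contra hlt
  exact hlt (hmax (hNN'.trans hQ) (not_le.mp hlt).le)

lemma exists_conj_of_fix_of_fullyNormalized (hp : p.Prime) (hS : IsPGroup p S)
    (hF : F.Saturated p) (hN : F.FullyNormalized N) (hT : F.Centric T) (hTN : T ≤ N)
    (hNT : N ≤ normalizer (T : Set S)) (hα : F.Mor N α) (hfix : ∀ t ∈ T, α t = t) :
    ∃ z ∈ T, ∀ x ∈ N, α x = z * x * z⁻¹ := by
  have hc := fun x (hx : x ∈ N) => hα.inv_mul_mem_of_fix hT hTN hNT hfix hx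
  have hmaps := fun x (hx : x ∈ N) => hα.apply_mem_of_fix hT hTN hNT hfix hx
  have := Fact.mk hp
  obtain ⟨k, hk⟩ := hS.exists_card_eq
  have hσ : hα.toMulAut hmaps ^ p ^ k = 1 := MulEquiv.ext fun x => Subtype.ext <| by
    rw [Mor.coe_toMulAut_pow_apply, hα.iterate_apply_eq_mul_pow hTN hfix x.2 (hc x x.2), ← hk,
      pow_card_eq_one', mul_one]
    rfl
  obtain ⟨τ, ⟨f, hf, hτ⟩, s, hs⟩ :=
    hF.exists_conj_mem_range hp hS hN ⟨α, hα, fun _ => rfl⟩ hσ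
  refine exists_conj_of_comp_eq_conj_comp hT hTN hf hmaps hfix (s := s) fun x hx => ?_
  have h := congrArg (fun φ : MulAut N => (φ (τ ⟨x, hx⟩) : S)) hs
  simp only [normalizerMonoidHom_apply_apply_coe, MulAut.mul_apply, MulAut.inv_apply,
    MulEquiv.symm_apply_apply] at h
  rwa [hτ, hτ, Mor.coe_toMulAut_apply] at h

lemma exists_conj_of_fix_of_le_normalizer (hp : p.Prime) (hS : IsPGroup p S)
    (hF : F.Saturated p) (hT : F.Centric T) (hTN : T ≤ N) (hNT : N ≤ normalizer (T : Set S))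
    (hα : F.Mor N α) (hfix : ∀ t ∈ T, α t = t) :
    ∃ z ∈ T, ∀ x ∈ N, α x = z * x * z⁻¹ := by
  obtain ⟨ω, hω, hN'⟩ := exists_mor_fullyNormalized_map (F := F) N
  obtain ⟨ωi, hωi, hωiN, hωiω⟩ := hω.exists_inverse
  have hmaps := fun x (hx : x ∈ N) => hα.apply_mem_of_fix hT hTN hNT hfix hx
  have hβ : F.Mor (hω.map N le_rfl) (ω ∘ α ∘ ωi) :=
    F.comp_mem (F.comp_mem hωi hα hωiN) hω fun y hy => hmaps _ (hωiN y hy)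
  have hβω : ∀ x ∈ N, (ω ∘ α ∘ ωi) (ω x) = ω (α x) := fun x hx => by
    simp only [Function.comp_apply, hωiω x hx]
  have hN'T' : hω.map N le_rfl ≤ normalizer (hω.map T hTN : Set S) := by
    rintro _ ⟨x, hx, rfl⟩
    refine mem_normalizer_fintype ?_
    rintro _ ⟨t, ht, rfl⟩
    rw [← hω.map_conj hx (hTN ht)]
    exact hω.apply_mem_map ((mem_normalizer_iff.mp (hNT hx) t).mp ht)
  have hβfix : ∀ t ∈ hω.map T hTN, (ω ∘ α ∘ ωi) t = t := by
    rintro _ ⟨t, ht, rfl⟩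
    rw [hβω t (hTN ht), hfix t ht]
  obtain ⟨_, ⟨z, hz, rfl⟩, hβz⟩ := exists_conj_of_fix_of_fullyNormalized hp hS hF hN'
    (hT.of_isConj (hω.isConj_map T hTN)) (hω.map_mono hTN le_rfl hTN) hN'T' hβ hβfix
  refine ⟨z, hz, fun x hx => F.inj_on hω (hmaps x hx)
    (N.mul_mem (N.mul_mem (hTN hz) hx) (N.inv_mem (hTN hz))) ?_⟩
  rw [← hβω x hx, hβz _ (hω.apply_mem_map hx), hω.map_conj (hTN hz) hx]

lemma exists_conj_of_fix (hp : p.Prime) (hS : IsPGroup p S) (hF : F.Saturated p)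
    {Q : Subgroup S} (hT : F.Centric T) (hTQ : T ≤ Q) (hα : F.Mor Q α)
    (hfix : ∀ t ∈ T, α t = t) :
    ∃ z ∈ T, ∀ x ∈ Q, α x = z * x * z⁻¹ := by
  induction T using WellFoundedGT.induction generalizing α with
  | _ T ih =>
  rcases hTQ.eq_or_lt with rfl | hlt
  · exact ⟨1, T.one_mem, fun x hx => by rw [hfix x hx]; group⟩
  have := Fact.mk hp
  have hTN : T < normalizer (T : Set S) ⊓ Q := hS.lt_normalizer_inf hlt
  obtain ⟨z₁, hz₁, hαz₁⟩ := exists_conj_of_fix_of_le_normalizer hp hS hF hT hTN.le inf_le_left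
    (F.restrict_mem _ inf_le_right hα) hfix
  have hα₁ : F.Mor Q ((fun y => z₁⁻¹ * y * z₁⁻¹⁻¹) ∘ α) :=
    F.comp_mem hα (F.conj_mem ⊤ z₁⁻¹) fun _ _ => mem_top _
  have hfix₁ : ∀ y ∈ normalizer (T : Set S) ⊓ Q, ((fun y => z₁⁻¹ * y * z₁⁻¹⁻¹) ∘ α) y = y := by
    intro y hy
    rw [Function.comp_apply, hαz₁ y hy]
    group
  obtain ⟨z₂, hz₂, hαz₂⟩ := ih _ hTN (hT.mono hTN.le) inf_le_right hα₁ hfix₁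
  have hz₂T : z₂ ∈ T := hT.centralizer_le <| mem_centralizer_iff.mpr fun t ht => by
    have h := hαz₂ t (hTQ ht)
    rw [hfix₁ t (hTN.le ht)] at h
    calc t * z₂ = z₂ * t * z₂⁻¹ * z₂ := by rw [← h]
      _ = z₂ * t := by group
  refine ⟨z₁ * z₂, T.mul_mem hz₁ hz₂T, fun x hx => ?_⟩
  have h := hαz₂ x hx
  rw [Function.comp_apply] at h
  calc α x = z₁ * (z₁⁻¹ * α x * z₁⁻¹⁻¹) * z₁⁻¹ := by group
    _ = z₁ * z₂ * x * (z₁ * z₂)⁻¹ := by rw [h]; group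

end Finite

end FusionSystem

/-- Puig.  If `F` is a saturated fusion system on a finite `p`-group `S`,
`P ≤ Q ≤ S` with `P` `F`-centric, and `ψ₁, ψ₂ : Q → S` are `F`-morphisms agreeing on `P`,
then `ψ₂ = ψ₁ ∘ c_z` on `Q` for some `z ∈ Z(P)`. -/
theorem stmt15 (p : ℕ) (hp : p.Prime) (S : Type) [Group S] [Fintype S]
    (hS : IsPGroup p S) (F : FusionSystem S) (hF : F.Saturated p)
    (P Q : Subgroup S) (hPQ : P ≤ Q) (hP : F.Centric P)
    (ψ₁ ψ₂ : S → S) (h1 : F.Mor Q ψ₁) (h2 : F.Mor Q ψ₂)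
    (hagree : ∀ x ∈ P, ψ₁ x = ψ₂ x) :
    ∃ z ∈ P, (∀ x ∈ P, z * x = x * z) ∧ ∀ x ∈ Q, ψ₂ x = ψ₁ (z * x * z⁻¹) := by
  obtain ⟨χ, hχ, hχQ, hχψ⟩ := h1.exists_inverse
  have hfix : ∀ t ∈ h1.map P hPQ, (ψ₂ ∘ χ) t = t := by
    rintro _ ⟨x, hx, rfl⟩
    rw [Function.comp_apply, hχψ x (hPQ hx), hagree x hx]
  obtain ⟨_, ⟨z, hz, rfl⟩, hαz⟩ := FusionSystem.exists_conj_of_fix hp hS hF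
    (hP.of_isConj (h1.isConj_map P hPQ)) (h1.map_mono hPQ le_rfl hPQ)
    (F.comp_mem hχ h2 hχQ) hfix
  have hψ : ∀ x ∈ Q, ψ₂ x = ψ₁ (z * x * z⁻¹) := fun x hx => by
    rw [h1.map_conj (hPQ hz) hx, ← hαz _ (h1.apply_mem_map hx), Function.comp_apply, hχψ x hx]
  refine ⟨z, hz, fun x hx => ?_, hψ⟩
  have hzx : z * x * z⁻¹ = x := F.inj_on h1 (Q.mul_mem (Q.mul_mem (hPQ hz) (hPQ hx))
    (Q.inv_mem (hPQ hz))) (hPQ hx) (by rw [← hψ x (hPQ hx), hagree x hx])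
  calc z * x = z * x * z⁻¹ * z := by group
    _ = x * z := by rw [hzx]
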